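/- arXiv:0910.2960 — 4 statements merged into one kernel-verified Lean document; each statement's English description precedes it below -/
import Mathlib

section
/- Let 𝒫_k = 2·3·5⋯p_k denote the k-th primorial (the product of the first k primes). Then for every integer d with 2 ≤ d < 𝒫_k, one has 𝔖(d) < 𝔖(𝒫_k). -/
open Filter Real

/-- The `n`-th prime, 1-indexed: `nthPrime 1 = 2`, `nthPrime 2 = 3`, ... -/
noncomputable def nthPrime (n : ℕ) : ℕ := Nat.nth Nat.Prime (n - 1)

/-- `N x d` is the number of indices `n ≥ 2` with `pₙ ≤ x` and `pₙ - pₙ₋₁ = d`. -/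
noncomputable def N (x : ℝ) (d : ℕ) : ℕ :=
  Set.ncard {n : ℕ | 2 ≤ n ∧ (nthPrime n : ℝ) ≤ x ∧ nthPrime n - nthPrime (n - 1) = d}

/-- `N* x`, the maximal number of occurrences of any gap among consecutive primes up to `x`. -/
noncomputable def Nstar (x : ℝ) : ℕ := sSup (Set.range fun d => N x d)

/-- A positive integer `d` is a jumping champion for `x` if `N x d` attains `max_d N x d`. -/
def JumpingChampion (x : ℝ) (d : ℕ) : Prop := 0 < d ∧ ∀ e : ℕ, N x e ≤ N x d

/-- `pi2 x d` counts primes `q ≤ x` such that `q - d` is also prime. -/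
noncomputable def pi2 (x : ℝ) (d : ℕ) : ℕ :=
  Set.ncard {q : ℕ | q.Prime ∧ (q : ℝ) ≤ x ∧ (q - d).Prime}

/-- `pi3 x d d'` counts primes `q ≤ x` such that `q - d` and `q - d'` are both prime. -/
noncomputable def pi3 (x : ℝ) (d d' : ℕ) : ℕ :=
  Set.ncard {q : ℕ | q.Prime ∧ (q : ℝ) ≤ x ∧ (q - d).Prime ∧ (q - d').Prime}

/-- The twin prime constant `C₂ = ∏_{p > 2} (1 - 1/(p-1)²)`. -/
noncomputable def C2 : ℝ := ∏' q : {q : ℕ // q.Prime ∧ 2 < q}, (1 - 1 / ((q : ℕ) - 1 : ℝ) ^ 2)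

/-- The singular series `𝔖(d)`. -/
noncomputable def singularSeries (d : ℕ) : ℝ :=
  if Even d then
    2 * C2 * ∏ q ∈ d.primeFactors.filter (fun q => 2 < q), ((q : ℝ) - 1) / ((q : ℝ) - 2)
  else 0

/-- `nu d' d q` is the number of distinct residue classes mod `q` occupied by `{0, d', d}`. -/
def nu (d' d : ℕ) (q : ℕ) : ℕ :=
  ({(0 : ZMod q), (d' : ZMod q), (d : ZMod q)} : Finset (ZMod q)).card

/-- The singular series of the triple `{0, d', d}`. -/
noncomputable def tripleSingularSeries (d' d : ℕ) : ℝ :=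
  ∏' q : Nat.Primes, ((1 - 1 / ((q : ℕ) : ℝ)) ^ 3)⁻¹ * (1 - (nu d' d q : ℝ) / ((q : ℕ) : ℝ))

/-- The `k`-th primorial, the product of the first `k` primes. -/
noncomputable def primorialN (k : ℕ) : ℕ := ∏ i ∈ Finset.range k, Nat.nth Nat.Prime i

/-- The index `n` of the largest primorial `𝒫ₙ ≤ y`. -/
noncomputable def primorialFloorIndex (y : ℝ) : ℕ := sSup {n : ℕ | (primorialN n : ℝ) ≤ y}

/-- Chebyshev's theta function `ϑ(t) = ∑_{p ≤ t} log p`. -/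
noncomputable def theta (t : ℝ) : ℝ :=
  ∑ q ∈ (Finset.range (⌊t⌋₊ + 1)).filter Nat.Prime, Real.log q

/-! For even `d`, `𝔖(d) = 2C₂ ∏ (q - 1)/(q - 2)` over the odd primes `q ∣ d`, and the factor
`(q - 1)/(q - 2)` exceeds `1` and decreases in `q`. If `d` has `m` odd prime factors, the `i`-th
smallest of them is at least the `i`-th odd prime, so their product is at least `p₂ ⋯ p_{m+1}`
while their contribution to `𝔖(d)` is at most that of `p₂, …, p_{m+1}`. Since
`2 p₂ ⋯ p_{m+1} ≤ d < 𝒫ₖ`, we get `m + 1 < k`, and the remaining factors of `𝒫ₖ`, each `> 1`,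
make the inequality strict. For odd `d`, `𝔖(d) = 0 < 𝔖(𝒫ₖ)` because `C₂ > 0`. -/

open Finset

namespace Nat

variable {p : ℕ → Prop}

theorem nth_le_orderEmbOfFin {s : Finset ℕ} (hs : ∀ x ∈ s, p x) (i : Fin #s) :
    nth p i ≤ s.orderEmbOfFin rfl i := by
  classical
  set e := s.orderEmbOfFin rfl
  have hsub : (Iic i).image e ⊆ (range (e i + 1)).filter p := by
    intro x hx
    obtain ⟨j, hj, rfl⟩ := mem_image.mp hx
    exact mem_filter.mpr ⟨mem_range.mpr (Nat.lt_succ_of_le (e.monotone (mem_Iic.mp hj))),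
      hs _ (s.orderEmbOfFin_mem rfl j)⟩
  have hcount : (i : ℕ) < count p (e i + 1) :=
    calc (i : ℕ) < #((Iic i).image e) := by
          rw [Finset.card_image_of_injective _ e.injective, Fin.card_Iic]; omega
      _ ≤ #((range (e i + 1)).filter p) := card_le_card hsub
      _ = count p (e i + 1) := (count_eq_card_filter_range p _).symm
  exact Nat.lt_succ_iff.mp (nth_lt_of_lt_count hcount)

theorem two_lt_nth_prime_succ (i : ℕ) : 2 < nth Nat.Prime (i + 1) :=
  nth_prime_zero_eq_two ▸ nth_strictMono infinite_setOfPred_prime i.succ_pos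

theorem infinite_setOf_prime_and_two_lt : {q | q.Prime ∧ 2 < q}.Infinite :=
  (infinite_setOfPred_prime.sdiff (Set.finite_le_nat 2)).mono fun _ hq => ⟨hq.1, not_le.mp hq.2⟩

theorem nth_prime_and_two_lt_eq_nth_prime_succ (i : ℕ) :
    nth (fun q => q.Prime ∧ 2 < q) i = nth Nat.Prime (i + 1) := by
  have hinf := infinite_setOf_prime_and_two_lt
  refine (eq_nth_of_strictMonoOn_of_mapsTo_of_surjOn (fun i => nth Nat.Prime (i + 1)) ?_ ?_ ?_
    (fun hf => (hinf hf).elim)).symm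
  · rintro q ⟨hq, h2⟩
    obtain ⟨j, rfl⟩ := subset_range_nth (p := Nat.Prime) hq
    obtain _ | j := j
    · rw [nth_prime_zero_eq_two] at h2
      exact absurd h2 (lt_irrefl 2)
    · exact ⟨j, fun hf => (hinf hf).elim, rfl⟩
  · exact fun i _ => ⟨prime_nth_prime _, two_lt_nth_prime_succ i⟩
  · exact fun a _ b _ hab => nth_strictMono infinite_setOfPred_prime (Nat.succ_lt_succ hab)

end Nat

namespace Finset

theorem prod_eq_prod_orderEmbOfFin {α M : Type*} [LinearOrder α] [CommMonoid M] (s : Finset α)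
    (g : α → M) : ∏ x ∈ s, g x = ∏ i : Fin #s, g (s.orderEmbOfFin rfl i) := by
  have := prod_map univ (s.orderEmbOfFin rfl).toEmbedding g
  rwa [map_orderEmbOfFin_univ] at this

section OrderedRing

variable {R : Type*} [CommSemiring R] [PartialOrder R] [IsOrderedRing R] {p : ℕ → Prop}
  {g : ℕ → R} {s : Finset ℕ}

theorem prod_range_nth_le_prod_of_monotoneOn (hp : (Set.ofPred p).Infinite)
    (hg0 : ∀ x, p x → 0 ≤ g x) (hg : MonotoneOn g (Set.ofPred p)) (hs : ∀ x ∈ s, p x) :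
    ∏ i ∈ range #s, g (Nat.nth p i) ≤ ∏ x ∈ s, g x := by
  rw [← Fin.prod_univ_eq_prod_range, prod_eq_prod_orderEmbOfFin s]
  exact prod_le_prod (fun i _ => hg0 _ (Nat.nth_mem_of_infinite hp i)) fun i _ =>
    hg (Nat.nth_mem_of_infinite hp i) (hs _ (s.orderEmbOfFin_mem rfl i))
      (Nat.nth_le_orderEmbOfFin hs i)

theorem prod_le_prod_range_nth_of_antitoneOn (hp : (Set.ofPred p).Infinite)
    (hg0 : ∀ x, p x → 0 ≤ g x) (hg : AntitoneOn g (Set.ofPred p)) (hs : ∀ x ∈ s, p x) :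
    ∏ x ∈ s, g x ≤ ∏ i ∈ range #s, g (Nat.nth p i) := by
  rw [← Fin.prod_univ_eq_prod_range, prod_eq_prod_orderEmbOfFin s]
  exact prod_le_prod (fun i _ => hg0 _ (hs _ (s.orderEmbOfFin_mem rfl i))) fun i _ =>
    hg (Nat.nth_mem_of_infinite hp i) (hs _ (s.orderEmbOfFin_mem rfl i))
      (Nat.nth_le_orderEmbOfFin hs i)

end OrderedRing

theorem strictMono_prod_range {R : Type*} [CommSemiring R] [PartialOrder R]
    [IsStrictOrderedRing R] {a : ℕ → R} (ha : ∀ i, 1 < a i) :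
    StrictMono fun n => ∏ i ∈ range n, a i :=
  strictMono_nat_of_lt_succ fun n => by
    rw [prod_range_succ]
    exact lt_mul_of_one_lt_right (prod_pos fun i _ => one_pos.trans (ha i)) (ha n)

end Finset

theorem Real.tprod_one_sub_pos {ι : Type*} {f : ι → ℝ} (hf : Summable f) (hf1 : ∀ i, f i < 1) :
    0 < ∏' i, (1 - f i) := by
  have h := Real.rexp_tsum_eq_tprod (f := fun i => 1 + -f i) (fun i => by linarith [hf1 i])
    (Real.summable_log_one_add_of_summable hf.neg)
  simp only [← sub_eq_add_neg] at h
  exact h ▸ Real.exp_pos _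

theorem C2_pos : 0 < C2 := by
  have hsum : Summable fun n : ℕ => 1 / ((n : ℝ) - 1) ^ 2 := by
    rw [← summable_nat_add_iff 1]
    simp
  refine Real.tprod_one_sub_pos (hsum.comp_injective Subtype.val_injective) fun q => ?_
  have : (2 : ℝ) < (q : ℕ) := by exact_mod_cast q.2.2
  rw [div_lt_one (by nlinarith)]
  nlinarith

noncomputable def singularFactor (q : ℕ) : ℝ := ((q : ℝ) - 1) / ((q : ℝ) - 2)

theorem one_lt_singularFactor {q : ℕ} (hq : 2 < q) : 1 < singularFactor q := by
  have : (2 : ℝ) < q := by exact_mod_cast hq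
  rw [singularFactor, one_lt_div (by linarith)]
  linarith

theorem antitoneOn_singularFactor : AntitoneOn singularFactor {q | 2 < q} := by
  intro a ha b _ hab
  have ha : (2 : ℝ) < a := by exact_mod_cast ha
  have hab : (a : ℝ) ≤ b := by exact_mod_cast hab
  rw [singularFactor, singularFactor, div_le_div_iff₀ (by linarith) (by linarith)]
  nlinarith

theorem prod_range_nth_prime_succ_le_prod {s : Finset ℕ} (hs : ∀ q ∈ s, q.Prime ∧ 2 < q) :
    ∏ i ∈ range #s, Nat.nth Nat.Prime (i + 1) ≤ ∏ q ∈ s, q := by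
  simpa only [Nat.nth_prime_and_two_lt_eq_nth_prime_succ, id] using
    prod_range_nth_le_prod_of_monotoneOn Nat.infinite_setOf_prime_and_two_lt (g := id)
      (fun _ _ => Nat.zero_le _) monotoneOn_id hs

theorem prod_singularFactor_le {s : Finset ℕ} (hs : ∀ q ∈ s, q.Prime ∧ 2 < q) :
    ∏ q ∈ s, singularFactor q ≤ ∏ i ∈ range #s, singularFactor (Nat.nth Nat.Prime (i + 1)) := by
  simpa only [Nat.nth_prime_and_two_lt_eq_nth_prime_succ] using
    prod_le_prod_range_nth_of_antitoneOn Nat.infinite_setOf_prime_and_two_lt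
      (fun _ hq => (one_pos.trans (one_lt_singularFactor hq.2)).le)
      (antitoneOn_singularFactor.mono fun _ hq => hq.2) hs

theorem prime_and_two_lt_of_mem_filter_primeFactors {d q : ℕ}
    (hq : q ∈ d.primeFactors.filter (2 < ·)) : q.Prime ∧ 2 < q :=
  ⟨Nat.prime_of_mem_primeFactors (mem_filter.mp hq).1, (mem_filter.mp hq).2⟩

theorem two_mul_prod_oddPrimeFactors_le {d : ℕ} (hd : Even d) (hd0 : d ≠ 0) :
    2 * ∏ q ∈ d.primeFactors.filter (2 < ·), q ≤ d := by
  have h2 : 2 ∉ d.primeFactors.filter (2 < ·) := by simp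
  have hsub : insert 2 (d.primeFactors.filter (2 < ·)) ⊆ d.primeFactors :=
    insert_subset (by simp [Nat.prime_two, hd.two_dvd, hd0]) (filter_subset _ _)
  calc 2 * ∏ q ∈ d.primeFactors.filter (2 < ·), q
      = ∏ q ∈ insert 2 (d.primeFactors.filter (2 < ·)), q :=
        (prod_insert (f := fun q => q) h2).symm
    _ ≤ ∏ q ∈ d.primeFactors, q :=
      Nat.le_of_dvd (prod_pos fun q hq => (Nat.prime_of_mem_primeFactors hq).pos)
        (prod_dvd_prod_of_subset _ _ _ hsub)
    _ ≤ d := Nat.le_of_dvd (Nat.pos_of_ne_zero hd0) (Nat.prod_primeFactors_dvd d)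

theorem primorialN_succ (j : ℕ) :
    primorialN (j + 1) = 2 * ∏ i ∈ range j, Nat.nth Nat.Prime (i + 1) := by
  rw [primorialN, prod_range_succ', Nat.nth_prime_zero_eq_two, mul_comm]

theorem oddPrimeFactors_primorialN_succ (j : ℕ) :
    (primorialN (j + 1)).primeFactors.filter (2 < ·) =
      (range j).image fun i => Nat.nth Nat.Prime (i + 1) := by
  set X := (range j).image fun i => Nat.nth Nat.Prime (i + 1)
  have hX : ∀ q ∈ X, q.Prime ∧ 2 < q := by
    simp [X, Nat.prime_nth_prime, Nat.two_lt_nth_prime_succ]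
  have h2X : 2 ∉ X := fun h => lt_irrefl 2 (hX 2 h).2
  have hprod : primorialN (j + 1) = ∏ q ∈ insert 2 X, q := by
    rw [prod_insert h2X, prod_image fun a _ b _ h =>
      add_right_cancel (Nat.nth_injective Nat.infinite_setOfPred_prime h), primorialN_succ]
  rw [hprod, Nat.primeFactors_prod fun q hq =>
      (mem_insert.mp hq).elim (· ▸ Nat.prime_two) (hX q · |>.1),
    filter_insert, if_neg (lt_irrefl 2), filter_true_of_mem fun q hq => (hX q hq).2]

theorem singularSeries_primorialN_succ (j : ℕ) :
    singularSeries (primorialN (j + 1)) =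
      2 * C2 * ∏ i ∈ range j, singularFactor (Nat.nth Nat.Prime (i + 1)) := by
  rw [singularSeries, if_pos (primorialN_succ j ▸ even_two_mul _),
    oddPrimeFactors_primorialN_succ, prod_image fun a _ b _ h =>
      add_right_cancel (Nat.nth_injective Nat.infinite_setOfPred_prime h)]
  rfl

theorem card_oddPrimeFactors_lt {d j : ℕ} (hd : Even d) (hd0 : d ≠ 0)
    (hdj : d < primorialN (j + 1)) : #(d.primeFactors.filter (2 < ·)) < j := by
  refine (strictMono_prod_range fun i =>
    one_lt_two.trans (Nat.two_lt_nth_prime_succ i)).lt_iff_lt.mp ?_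
  have hd := two_mul_prod_oddPrimeFactors_le hd hd0
  rw [primorialN_succ] at hdj
  exact (prod_range_nth_prime_succ_le_prod fun _ => prime_and_two_lt_of_mem_filter_primeFactors)
    |>.trans_lt (by omega)

/-- The singular series increases most rapidly on primorials: `𝔖(d) < 𝔖(𝒫ₖ)` for
`2 ≤ d < 𝒫ₖ`. -/
theorem singularSeries_lt_of_lt_primorial (k : ℕ) (d : ℕ) (hd2 : 2 ≤ d)
    (hdk : d < primorialN k) :
    singularSeries d < singularSeries (primorialN k) := by
  obtain ⟨j, rfl⟩ : ∃ j, k = j + 1 :=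
    Nat.exists_eq_add_one.mpr (Nat.pos_of_ne_zero fun hk => by simp [hk, primorialN] at hdk; omega)
  have hC2 : 0 < 2 * C2 := mul_pos two_pos C2_pos
  have hfactor (i : ℕ) : 1 < singularFactor (Nat.nth Nat.Prime (i + 1)) :=
    one_lt_singularFactor (Nat.two_lt_nth_prime_succ i)
  rw [singularSeries_primorialN_succ]
  rcases Nat.even_or_odd d with hd | hd
  · rw [singularSeries, if_pos hd]
    refine mul_lt_mul_of_pos_left ?_ hC2
    set T := d.primeFactors.filter (2 < ·)
    calc ∏ q ∈ T, singularFactor q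
        ≤ ∏ i ∈ range #T, singularFactor (Nat.nth Nat.Prime (i + 1)) :=
          prod_singularFactor_le fun _ => prime_and_two_lt_of_mem_filter_primeFactors
      _ < ∏ i ∈ range j, singularFactor (Nat.nth Nat.Prime (i + 1)) :=
          strictMono_prod_range hfactor (card_oddPrimeFactors_lt hd (by omega) hdk)
  · rw [singularSeries, if_neg (Nat.not_even_iff_odd.mpr hd)]
    exact mul_pos hC2 (prod_pos fun i _ => one_pos.trans (hfactor i))
end

section
/- For every x ≥ 2 and all integers d, d' with 1 ≤ d' < d, one has π₂(x,d) − Σ_{1 ≤ d' < d} π₃(x,d,d') ≤ N(x,d) ≤ π₂(x,d). -/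
open Filter Real

lemma ncard_finset_biUnion_le {α β : Type*} (s : Finset β) (t : β → Set α) :
    (⋃ b ∈ s, t b).ncard ≤ ∑ b ∈ s, (t b).ncard := by
  classical
  refine Finset.induction_on s (by simp) ?_
  intro a s ha ih
  rw [Finset.set_biUnion_insert, Finset.sum_insert ha]
  exact le_trans (Set.ncard_union_le _ _) (by omega)

/-- Sandwiching the consecutive-prime gap count between prime pair counts:
`π₂(x,d) − Σ_{1 ≤ d' < d} π₃(x,d,d') ≤ N(x,d) ≤ π₂(x,d)`. -/
theorem N_between_pi2_and_pi2_sub_pi3 (x : ℝ) (hx : 2 ≤ x) (d : ℕ) (hd : 1 ≤ d) :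
    (pi2 x d : ℝ) - ∑ d' ∈ Finset.Ico 1 d, (pi3 x d d' : ℝ) ≤ (N x d : ℝ) ∧
      (N x d : ℝ) ≤ (pi2 x d : ℝ) := by
  classical
  have hinf := Nat.infinite_setOf_prime
  set S2 : Set ℕ := {q : ℕ | q.Prime ∧ (q : ℝ) ≤ x ∧ (q - d).Prime} with hS2def
  set SN : Set ℕ :=
    {n : ℕ | 2 ≤ n ∧ (nthPrime n : ℝ) ≤ x ∧ nthPrime n - nthPrime (n - 1) = d} with hSNdef
  set S3 : ℕ → Set ℕ :=
    fun d' => {q : ℕ | q.Prime ∧ (q : ℝ) ≤ x ∧ (q - d).Prime ∧ (q - d').Prime} with hS3def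
  have hS2fin : S2.Finite := by
    apply (Set.finite_Icc 0 ⌊x⌋₊).subset
    intro q hq
    exact ⟨Nat.zero_le _, Nat.le_floor hq.2.1⟩
  have hS3fin : ∀ d', (S3 d').Finite := by
    intro d'
    apply (Set.finite_Icc 0 ⌊x⌋₊).subset
    intro q hq
    exact ⟨Nat.zero_le _, Nat.le_floor hq.2.1⟩
  -- the image of SN under nthPrime lands in S2
  have himg : nthPrime '' SN ⊆ S2 := by
    rintro _ ⟨n, ⟨hn2, hnx, hgap⟩, rfl⟩
    have hq : (nthPrime n).Prime := Nat.nth_mem_of_infinite hinf _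
    have hplt : nthPrime (n - 1) < nthPrime n := by
      unfold nthPrime
      exact (Nat.nth_lt_nth hinf).2 (by omega)
    refine ⟨hq, hnx, ?_⟩
    have : nthPrime n - d = nthPrime (n - 1) := by omega
    rw [this]
    exact Nat.nth_mem_of_infinite hinf _
  have hinj : Set.InjOn nthPrime SN := by
    intro n hn m hm h
    have := Nat.nth_injective hinf h
    have hn2 := hn.1; have hm2 := hm.1
    omega
  have himgfin : (nthPrime '' SN).Finite := hS2fin.subset himg
  have hNcard : N x d = (nthPrime '' SN).ncard := (Set.ncard_image_of_injOn hinj).symm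
  constructor
  · -- lower bound
    have hsub : S2 ⊆ (nthPrime '' SN) ∪ ⋃ d' ∈ Finset.Ico 1 d, S3 d' := by
      intro q hq
      obtain ⟨hqp, hqx, hqd⟩ := hq
      set k := Nat.count Nat.Prime q with hk
      have hqk : Nat.nth Nat.Prime k = q := Nat.nth_count hqp
      have h2 : 2 ≤ q - d := hqd.two_le
      have hc3 : Nat.count Nat.Prime 3 = 1 := by
        decide
      have hk1 : 1 ≤ k := by
        have := Nat.count_monotone Nat.Prime (show 3 ≤ q by omega)
        omega
      set p := Nat.nth Nat.Prime (k - 1) with hp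
      have hpq : p < q := by
        rw [← hqk]
        exact (Nat.nth_lt_nth hinf).2 (by omega)
      have hpprime : p.Prime := Nat.nth_mem_of_infinite hinf _
      have hmax : q - d ≤ p := by
        have h1 : Nat.count Nat.Prime (q - d + 1) = Nat.count Nat.Prime (q - d) + 1 := by
          simp [Nat.count_succ, hqd]
        have h2' := Nat.count_monotone Nat.Prime (show q - d + 1 ≤ q by omega)
        have h3 : Nat.count Nat.Prime (q - d) ≤ k - 1 := by omega
        have := (Nat.nth_le_nth hinf).2 h3
        rwa [Nat.nth_count hqd] at this
      by_cases hcase : q - p = d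
      · left
        refine ⟨k + 1, ⟨by omega, ?_, ?_⟩, ?_⟩
        · show (nthPrime (k+1) : ℝ) ≤ x
          unfold nthPrime
          simpa [hqk] using hqx
        · show nthPrime (k+1) - nthPrime (k+1-1) = d
          unfold nthPrime
          simp only [Nat.add_sub_cancel]
          rw [hqk]
          exact hcase
        · show nthPrime (k+1) = q
          unfold nthPrime
          simpa using hqk
      · right
        have hd'lt : q - p < d := by omega
        have hd'1 : 1 ≤ q - p := by omega
        refine Set.mem_biUnion (Finset.mem_Ico.2 ⟨hd'1, hd'lt⟩) ?_
        refine ⟨hqp, hqx, hqd, ?_⟩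
        have : q - (q - p) = p := by omega
        rw [this]
        exact hpprime
    have key : pi2 x d ≤ N x d + ∑ d' ∈ Finset.Ico 1 d, pi3 x d d' := by
      have h1 : pi2 x d = S2.ncard := rfl
      have h2 : S2.ncard ≤ ((nthPrime '' SN) ∪ ⋃ d' ∈ Finset.Ico 1 d, S3 d').ncard := by
        exact Set.ncard_le_ncard hsub (himgfin.union
          (Set.Finite.biUnion (Finset.Ico 1 d).finite_toSet fun d' _ => hS3fin d'))
      have h3 := Set.ncard_union_le (nthPrime '' SN) (⋃ d' ∈ Finset.Ico 1 d, S3 d')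
      have h4 := ncard_finset_biUnion_le (Finset.Ico 1 d) S3
      have h5 : ∀ d', (S3 d').ncard = pi3 x d d' := fun _ => rfl
      simp only [h5] at h4
      omega
    rw [sub_le_iff_le_add]
    exact_mod_cast le_trans (Nat.cast_le.2 key) (by push_cast; ring_nf; exact le_refl _)
  · -- upper bound
    have : N x d ≤ pi2 x d := by
      rw [hNcard]
      exact Set.ncard_le_ncard himg hS2fin
    exact_mod_cast this
end

section
/- For all integers d, d' with 1 ≤ d' < d, setting Δ = d'·d·(d − d'), one has 𝔖({0, d', d}) ≤ ∏_{p ∣ Δ} (1 − 1/p)^{−2}, where the product is over the primes dividing Δ. -/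
open Filter Real

/-- With `Δ = d'·d·(d−d')`, one has `𝔖({0,d',d}) ≤ ∏_{p ∣ Δ} (1 − 1/p)^{-2}`. -/
theorem tripleSingularSeries_le_prod_primeFactors (d' d : ℕ) (hd' : 1 ≤ d') (hdd : d' < d) :
    tripleSingularSeries d' d ≤
      ∏ q ∈ (d' * d * (d - d')).primeFactors, ((1 - 1 / (q : ℝ)) ^ 2)⁻¹ := by
  set Δ := d' * d * (d - d') with hΔdef
  have hΔ0 : Δ ≠ 0 := by
    have h1 : 0 < d - d' := Nat.sub_pos_of_lt hdd
    have h2 : 0 < d' := hd'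
    have h3 : 0 < d := lt_trans h2 hdd
    positivity
  set S := Δ.primeFactors with hSdef
  set R := ∏ q ∈ S, ((1 - 1 / (q : ℝ)) ^ 2)⁻¹ with hRdef
  have hgen : ∀ p : ℕ, p.Prime → (0:ℝ) < 1 - 1 / p := by
    intro p hp
    have h2 : (2:ℝ) ≤ p := by exact_mod_cast hp.two_le
    have : (1:ℝ)/p ≤ 1/2 := by
      apply one_div_le_one_div_of_le <;> linarith
    linarith
  have hfacS : ∀ q ∈ S, (1:ℝ) ≤ ((1 - 1 / (q : ℝ)) ^ 2)⁻¹ := by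
    intro q hq
    have hp := Nat.prime_of_mem_primeFactors hq
    have h0 := hgen q hp
    have hq1 : (1:ℝ) ≤ q := by exact_mod_cast hp.one_lt.le
    have hq0' : (0:ℝ) ≤ 1/(q:ℝ) := by positivity
    have hq1' : (1:ℝ)/(q:ℝ) ≤ 1 := by rw [div_le_one (by linarith)]; linarith
    have h1 : (1 - 1/(q:ℝ))^2 ≤ 1 := by nlinarith
    rw [le_inv_comm₀]
    · simpa using h1
    · norm_num
    · positivity
  have hR1 : (1:ℝ) ≤ R := by
    rw [hRdef]
    calc (1:ℝ) = ∏ q ∈ S, 1 := by simp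
      _ ≤ ∏ q ∈ S, ((1 - 1 / (q : ℝ)) ^ 2)⁻¹ :=
          Finset.prod_le_prod (fun q _ => by norm_num) hfacS
  set f : Nat.Primes → ℝ :=
    fun q => ((1 - 1 / ((q : ℕ) : ℝ)) ^ 3)⁻¹ * (1 - (nu d' d q : ℝ) / ((q : ℕ) : ℝ)) with hfdef
  set g : Nat.Primes → ℝ :=
    fun q => if (q : ℕ) ∈ S then ((1 - 1 / ((q : ℕ) : ℝ)) ^ 2)⁻¹ else 1 with hgdef
  -- nonnegativity of f
  have hf0 : ∀ q : Nat.Primes, 0 ≤ f q := by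
    intro q
    have hp := q.2
    haveI : Fact (q : ℕ).Prime := ⟨hp⟩
    have hν : nu d' d q ≤ (q : ℕ) := by
      simpa [nu, ZMod.card] using
        Finset.card_le_univ ({(0 : ZMod q), (d' : ZMod q), (d : ZMod q)} : Finset (ZMod q))
    have hq0 : (0:ℝ) < ((q:ℕ):ℝ) := by exact_mod_cast hp.pos
    have h1 : (0:ℝ) ≤ 1 - (nu d' d q : ℝ) / ((q:ℕ):ℝ) := by
      rw [sub_nonneg, div_le_one hq0]
      exact_mod_cast hν
    have h2 := hgen q hp
    simp only [hfdef]
    positivity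
  -- pointwise bound f ≤ g
  have hfg : ∀ q : Nat.Primes, f q ≤ g q := by
    intro q
    have hp := q.2
    have ha := hgen q hp
    have hq2 : (2:ℝ) ≤ ((q:ℕ):ℝ) := by exact_mod_cast hp.two_le
    have hq0 : (0:ℝ) < ((q:ℕ):ℝ) := by linarith
    simp only [hfdef, hgdef]
    by_cases hqS : (q : ℕ) ∈ S
    · rw [if_pos hqS]
      have hν1 : 1 ≤ nu d' d q := by
        apply Finset.card_pos.mpr
        exact ⟨0, by simp⟩
      have hb : 1 - (nu d' d q : ℝ) / ((q:ℕ):ℝ) ≤ 1 - 1 / ((q:ℕ):ℝ) := by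
        have h1 : (1:ℝ) / ((q:ℕ):ℝ) ≤ (nu d' d q : ℝ) / ((q:ℕ):ℝ) := by
          gcongr
          exact_mod_cast hν1
        linarith
      calc ((1 - 1 / ((q:ℕ):ℝ)) ^ 3)⁻¹ * (1 - (nu d' d q : ℝ) / ((q:ℕ):ℝ))
          ≤ ((1 - 1 / ((q:ℕ):ℝ)) ^ 3)⁻¹ * (1 - 1 / ((q:ℕ):ℝ)) := by
            apply mul_le_mul_of_nonneg_left hb (by positivity)
        _ = ((1 - 1 / ((q:ℕ):ℝ)) ^ 2)⁻¹ := by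
            have ha' : (1 - 1 / ((q:ℕ):ℝ)) ≠ 0 := ne_of_gt ha
            rw [pow_succ, mul_inv, mul_assoc, inv_mul_cancel₀ ha', mul_one]
    · rw [if_neg hqS]
      -- p ∤ Δ, so ν = 3
      have hndvd : ¬ (q:ℕ) ∣ Δ := by
        intro h
        exact hqS (Nat.mem_primeFactors.mpr ⟨hp, h, hΔ0⟩)
      have hd'dvd : ¬ (q:ℕ) ∣ d' := fun h => hndvd (h.mul_right _ |>.mul_right _)
      have hddvd : ¬ (q:ℕ) ∣ d := fun h => hndvd ((Dvd.dvd.mul_left h d').mul_right _)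
      have hsubdvd : ¬ (q:ℕ) ∣ (d - d') := fun h => hndvd (h.mul_left _)
      haveI : Fact (q : ℕ).Prime := ⟨hp⟩
      have h0d' : (d' : ZMod q) ≠ 0 := fun h => hd'dvd ((ZMod.natCast_eq_zero_iff _ _).mp h)
      have h0d : (d : ZMod q) ≠ 0 := fun h => hddvd ((ZMod.natCast_eq_zero_iff _ _).mp h)
      have hd'd : (d' : ZMod q) ≠ (d : ZMod q) := by
        intro h
        apply hsubdvd
        rw [← ZMod.natCast_eq_zero_iff, Nat.cast_sub hdd.le, h, sub_self]
      have hν3 : nu d' d q = 3 := by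
        rw [nu, Finset.card_insert_of_notMem, Finset.card_insert_of_notMem, Finset.card_singleton]
        · simpa using hd'd
        · simp [Ne.symm h0d', Ne.symm h0d, eq_comm]
      rw [hν3]
      rw [inv_mul_le_iff₀ (by positivity), mul_one]
      have key : 1 - 3 / ((q:ℕ):ℝ) ≤ (1 - 1 / ((q:ℕ):ℝ)) ^ 3 := by
        set t := 1 / ((q:ℕ):ℝ) with htdef
        have ht0 : 0 < t := by positivity
        have ht1 : t ≤ 1/2 := by
          rw [htdef, div_le_div_iff₀ hq0 (by norm_num)]
          linarith
        have h3t : 1 - 3/((q:ℕ):ℝ) = 1 - 3 * t := by rw [htdef]; ring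
        rw [h3t]
        nlinarith [mul_pos (mul_pos ht0 ht0) (show (0:ℝ) < 3 - t by linarith)]
      push_cast
      exact key
  -- partial products are bounded by R
  have key : ∀ s : Finset Nat.Primes, ∏ q ∈ s, f q ≤ R := by
    intro s
    have step1 : ∏ q ∈ s, f q ≤ ∏ q ∈ s, g q :=
      Finset.prod_le_prod (fun q _ => hf0 q) (fun q _ => hfg q)
    have step2 : ∏ q ∈ s, g q
        = ∏ q ∈ s.filter (fun q : Nat.Primes => (q:ℕ) ∈ S), ((1 - 1 / ((q:ℕ):ℝ)) ^ 2)⁻¹ :=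
      (Finset.prod_filter _ _).symm
    have step3 : ∏ q ∈ s.filter (fun q : Nat.Primes => (q:ℕ) ∈ S), ((1 - 1 / ((q:ℕ):ℝ)) ^ 2)⁻¹
        = ∏ p ∈ (s.filter (fun q : Nat.Primes => (q:ℕ) ∈ S)).image (fun q : Nat.Primes => (q:ℕ)),
            ((1 - 1 / (p:ℝ)) ^ 2)⁻¹ := by
      exact (Finset.prod_image (f := fun p : ℕ => ((1 - 1 / (p:ℝ)) ^ 2)⁻¹)
        (fun a _ b _ h => Subtype.coe_injective h)).symm
    have hsub : (s.filter (fun q : Nat.Primes => (q:ℕ) ∈ S)).image (fun q : Nat.Primes => (q:ℕ)) ⊆ S := by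
      intro p hp
      simp only [Finset.mem_image, Finset.mem_filter] at hp
      obtain ⟨q, ⟨_, hqS⟩, rfl⟩ := hp
      exact hqS
    have step4 : ∏ p ∈ (s.filter (fun q : Nat.Primes => (q:ℕ) ∈ S)).image (fun q : Nat.Primes => (q:ℕ)),
            ((1 - 1 / (p:ℝ)) ^ 2)⁻¹ ≤ R := by
      rw [hRdef]
      set T := (s.filter (fun q : Nat.Primes => (q:ℕ) ∈ S)).image (fun q : Nat.Primes => (q:ℕ)) with hT
      have hsplit : (∏ p ∈ S \ T, ((1 - 1 / (p:ℝ)) ^ 2)⁻¹) * ∏ p ∈ T, ((1 - 1 / (p:ℝ)) ^ 2)⁻¹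
          = ∏ p ∈ S, ((1 - 1 / (p:ℝ)) ^ 2)⁻¹ := Finset.prod_sdiff hsub
      have hT0 : (0:ℝ) ≤ ∏ p ∈ T, ((1 - 1 / (p:ℝ)) ^ 2)⁻¹ := by
        apply Finset.prod_nonneg
        intro p hp
        positivity
      have h1 : (1:ℝ) ≤ ∏ p ∈ S \ T, ((1 - 1 / (p:ℝ)) ^ 2)⁻¹ := by
        calc (1:ℝ) = ∏ p ∈ S \ T, 1 := by simp
          _ ≤ _ := Finset.prod_le_prod (fun p _ => by norm_num)
              (fun p hp => hfacS p (Finset.mem_sdiff.mp hp).1)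
      rw [← hsplit]
      exact le_mul_of_one_le_left hT0 h1
    calc ∏ q ∈ s, f q ≤ ∏ q ∈ s, g q := step1
      _ ≤ R := by rw [step2, step3]; exact step4
  have hrw : tripleSingularSeries d' d = ∏' q, f q := rfl
  rw [hrw]
  by_cases hm : Multipliable f
  · exact le_of_tendsto hm.hasProd (Filter.Eventually.of_forall key)
  · rw [tprod_eq_one_of_not_multipliable hm]
    exact hR1
end

section
/- For a real y ≥ 2, let ⌊y⌋_𝒫 denote the largest primorial not exceeding y. Then there exists a constant C > 0 such that for all sufficiently large x, 𝔖(⌊(log x)²⌋_𝒫) / 𝔖(⌊√(log x)⌋_𝒫) ≤ 1 + C/log log log x. -/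
open Filter Real

/- auxiliary lemmas -/


lemma primorialN_pos (k : ℕ) : 0 < primorialN k :=
  Finset.prod_pos fun i _ => (Nat.prime_nth_prime i).pos

lemma factorial_le_primorialN (k : ℕ) : (k + 1).factorial ≤ primorialN k := by
  induction k with
  | zero => simp [primorialN]
  | succ k ih =>
    have h1 : (k + 1 + 1).factorial = (k + 1).factorial * (k + 2) := by
      rw [Nat.factorial_succ]; ring
    rw [h1]
    simp only [primorialN, Finset.prod_range_succ]
    exact Nat.mul_le_mul ih (Nat.add_two_le_nth_prime k)

lemma le_primorialN (k : ℕ) : k ≤ primorialN k :=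
  le_trans (Nat.self_le_factorial k)
    (le_trans (Nat.factorial_le k.le_succ) (factorial_le_primorialN k))

lemma pfi_bddAbove (y : ℝ) : BddAbove {n : ℕ | (primorialN n : ℝ) ≤ y} := by
  refine ⟨⌊y⌋₊, fun n hn => Nat.le_floor ?_⟩
  exact le_trans (by exact_mod_cast le_primorialN n) hn

lemma pfi_le {y : ℝ} {k : ℕ} (h : (primorialN k : ℝ) ≤ y) : k ≤ primorialFloorIndex y :=
  le_csSup (pfi_bddAbove y) h

lemma pfi_spec {y : ℝ} (hy : 1 ≤ y) : (primorialN (primorialFloorIndex y) : ℝ) ≤ y := by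
  have h0 : (0 : ℕ) ∈ {n : ℕ | (primorialN n : ℝ) ≤ y} := by
    simp only [Set.mem_setOf_eq, primorialN, Finset.range_zero, Finset.prod_empty, Nat.cast_one]
    exact hy
  exact Nat.sSup_mem ⟨0, h0⟩ (pfi_bddAbove y)

lemma pfi_lt_succ {y : ℝ} : y < (primorialN (primorialFloorIndex y + 1) : ℝ) := by
  by_contra h
  push_neg at h
  have := pfi_le h
  omega

lemma primeFactors_primorialN (k : ℕ) :
    (primorialN k).primeFactors = (Finset.range k).image (Nat.nth Nat.Prime) := by
  induction k with
  | zero => simp [primorialN]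
  | succ k ih =>
    have h1 : primorialN (k + 1) = primorialN k * Nat.nth Nat.Prime k := by
      simp [primorialN, Finset.prod_range_succ]
    rw [h1, Nat.primeFactors_mul (primorialN_pos k).ne' (Nat.prime_nth_prime k).ne_zero, ih,
      (Nat.prime_nth_prime k).primeFactors, Finset.range_add_one, Finset.image_insert,
      Finset.insert_eq, Finset.union_comm]

noncomputable def gg (i : ℕ) : ℝ :=
  ((Nat.nth Nat.Prime i : ℝ) - 1) / ((Nat.nth Nat.Prime i : ℝ) - 2)

lemma three_le_nth {i : ℕ} (hi : 1 ≤ i) : 3 ≤ Nat.nth Nat.Prime i := by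
  have := Nat.add_two_le_nth_prime i
  omega

lemma singularSeries_primorialN {k : ℕ} (hk : 1 ≤ k) :
    singularSeries (primorialN k) = 2 * C2 * ∏ i ∈ Finset.Ico 1 k, gg i := by
  have heven : Even (primorialN k) := by
    rw [even_iff_two_dvd]
    have h0 : (0 : ℕ) ∈ Finset.range k := Finset.mem_range.mpr hk
    have := Finset.dvd_prod_of_mem (fun i => Nat.nth Nat.Prime i) h0
    simpa [primorialN, Nat.nth_prime_zero_eq_two] using this
  rw [singularSeries, if_pos heven, primeFactors_primorialN]
  have hfil : ((Finset.range k).image (Nat.nth Nat.Prime)).filter (fun q => 2 < q) =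
      (Finset.Ico 1 k).image (Nat.nth Nat.Prime) := by
    ext q
    simp only [Finset.mem_filter, Finset.mem_image, Finset.mem_range, Finset.mem_Ico]
    constructor
    · rintro ⟨⟨i, hi, rfl⟩, h2⟩
      refine ⟨i, ⟨?_, hi⟩, rfl⟩
      by_contra h
      push_neg at h
      interval_cases i
      simp [Nat.nth_prime_zero_eq_two] at h2
    · rintro ⟨i, ⟨hi1, hik⟩, rfl⟩
      refine ⟨⟨i, hik, rfl⟩, ?_⟩
      calc 2 < 3 := by norm_num
        _ ≤ Nat.nth Nat.Prime i := three_le_nth hi1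
  rw [hfil, Finset.prod_image (fun i _ j _ h => Nat.nth_injective Nat.infinite_setOf_prime h)]
  rfl

lemma primorialN_succ_le (k : ℕ) : primorialN (k + 1) ≤ 4 ^ Nat.nth Nat.Prime k := by
  have h1 : primorialN (k + 1) = ∏ q ∈ (Finset.range (k + 1)).image (Nat.nth Nat.Prime), q := by
    rw [Finset.prod_image (fun i _ j _ h => Nat.nth_injective Nat.infinite_setOf_prime h)]
    rfl
  have h2 : (Finset.range (k + 1)).image (Nat.nth Nat.Prime) ⊆
      (Finset.range (Nat.nth Nat.Prime k + 1)).filter Nat.Prime := by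
    intro q hq
    simp only [Finset.mem_image, Finset.mem_range] at hq
    obtain ⟨i, hi, rfl⟩ := hq
    simp only [Finset.mem_filter, Finset.mem_range]
    exact ⟨Nat.lt_succ_of_le (Nat.nth_monotone Nat.infinite_setOf_prime (Nat.lt_succ_iff.mp hi)),
      Nat.prime_nth_prime i⟩
  calc primorialN (k + 1) = _ := h1
    _ ≤ ∏ q ∈ (Finset.range (Nat.nth Nat.Prime k + 1)).filter Nat.Prime, q :=
        Finset.prod_le_prod_of_subset_of_one_le' h2
          (fun q hq _ => (Finset.mem_filter.mp hq).2.one_lt.le)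
    _ = primorial (Nat.nth Nat.Prime k) := rfl
    _ ≤ 4 ^ Nat.nth Nat.Prime k := primorial_le_4_pow _

lemma pow_le_two_mul_factorial (k : ℕ) : k ^ k ≤ (2 * k).factorial := by
  calc k ^ k ≤ k.factorial * (k + 1) ^ k :=
        le_trans (Nat.pow_le_pow_left k.le_succ k) (Nat.le_mul_of_pos_left _ k.factorial_pos)
    _ ≤ (k + k).factorial := Nat.factorial_mul_pow_le_factorial
    _ = (2 * k).factorial := by ring_nf


set_option maxHeartbeats 1000000 in
/-- The ratio of singular series at the primorial floors of `(log x)²` and `√(log x)` is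
`1 + O(1/log log log x)`. -/
theorem singularSeries_primorialFloor_ratio :
    ∃ C : ℝ, 0 < C ∧ ∃ X : ℝ, ∀ x ≥ X,
      singularSeries (primorialN (primorialFloorIndex ((Real.log x) ^ 2))) /
          singularSeries (primorialN (primorialFloorIndex (Real.sqrt (Real.log x)))) ≤
        1 + C / Real.log (Real.log (Real.log x)) := by
  refine ⟨192, by norm_num, ?_⟩
  have t1 : Tendsto Real.log atTop atTop := Real.tendsto_log_atTop
  have t2 : Tendsto (fun x : ℝ => Real.log (Real.log x)) atTop atTop := t1.comp t1
  have t3 : Tendsto (fun x : ℝ => Real.log (Real.log (Real.log x))) atTop atTop := t1.comp t2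
  have h1 : ∀ᶠ x : ℝ in atTop, 4 ≤ Real.log x := t1.eventually_ge_atTop 4
  have h2 : ∀ᶠ x : ℝ in atTop, 16 ≤ Real.log (Real.log x) := t2.eventually_ge_atTop 16
  have h3 : ∀ᶠ x : ℝ in atTop, 192 ≤ Real.log (Real.log (Real.log x)) := t3.eventually_ge_atTop 192
  obtain ⟨X, hX⟩ := eventually_atTop.mp ((h1.and h2).and h3)
  refine ⟨X, fun x hx => ?_⟩
  obtain ⟨⟨hL4, hA16⟩, hA2⟩ := hX x hx
  set L := Real.log x with hLdef
  set A := Real.log L with hAdef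
  set A2 := Real.log A with hA2def
  clear_value L A A2
  have hL0 : (0:ℝ) < L := by linarith
  have hL1 : (1:ℝ) ≤ L := by linarith
  have hA0 : (0:ℝ) < A := by linarith
  have hA20 : (0:ℝ) < A2 := by linarith
  -- basic facts about y1 = √L and y2 = L²
  have hy1 : (2:ℝ) ≤ Real.sqrt L := by
    have : Real.sqrt 4 ≤ Real.sqrt L := Real.sqrt_le_sqrt hL4
    rwa [show (4:ℝ) = 2^2 by norm_num, Real.sqrt_sq (by norm_num : (0:ℝ) ≤ 2)] at this
  have hy1' : (1:ℝ) ≤ Real.sqrt L := by linarith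
  have hy2 : (1:ℝ) ≤ L ^ 2 := one_le_pow₀ hL1
  set n := primorialFloorIndex (Real.sqrt L) with hndef
  set m := primorialFloorIndex (L ^ 2) with hmdef
  clear_value n m
  have hn1 : 1 ≤ n := by
    rw [hndef]
    apply pfi_le
    have : primorialN 1 = 2 := by simp [primorialN, Nat.nth_prime_zero_eq_two]
    rw [this]; exact_mod_cast hy1
  have hnm : n ≤ m := by
    rw [hmdef]
    apply pfi_le
    have hspec := pfi_spec hy1'
    rw [← hndef] at hspec
    refine le_trans hspec ?_
    calc Real.sqrt L ≤ Real.sqrt (L ^ 2) := Real.sqrt_le_sqrt (by nlinarith)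
      _ = L := Real.sqrt_sq hL0.le
      _ ≤ L ^ 2 := by nlinarith
  have hm1 : 1 ≤ m := le_trans hn1 hnm
  set p := Nat.nth Nat.Prime n with hpdef
  clear_value p
  have hp3 : 3 ≤ p := hpdef ▸ three_le_nth hn1
  -- lower bound for p
  have hpA : A / 4 < (p : ℝ) := by
    have hb : Real.sqrt L < ((4:ℕ) ^ p : ℕ) := by
      calc Real.sqrt L < (primorialN (n + 1) : ℝ) := by rw [hndef]; exact pfi_lt_succ
        _ ≤ _ := by rw [hpdef]; exact_mod_cast primorialN_succ_le n
    have hlog := Real.log_lt_log (by positivity) hb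
    rw [Real.log_sqrt hL0.le] at hlog
    push_cast at hlog
    rw [Real.log_pow] at hlog
    have hlog4 : Real.log 4 < 2 := by
      rw [show (4:ℝ) = 2^2 by norm_num, Real.log_pow]
      have := Real.log_two_lt_d9
      push_cast
      nlinarith
    have hppos : (0:ℝ) ≤ (p:ℝ) := Nat.cast_nonneg p
    nlinarith
  have hp2 : A / 8 ≤ (p : ℝ) - 2 := by linarith
  have hp2pos : (0:ℝ) < (p:ℝ) - 2 := by linarith
  -- upper bound for m
  have hfact : ((m + 1).factorial : ℝ) ≤ L ^ 2 := by
    calc ((m + 1).factorial : ℝ) ≤ (primorialN m : ℝ) := by exact_mod_cast factorial_le_primorialN m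
      _ ≤ L ^ 2 := by rw [hmdef]; exact pfi_spec hy2
  have hmB : (m : ℝ) ≤ 10 * A / A2 + 2 := by
    by_contra hcon
    push_neg at hcon
    set k := ⌈(5 * A / A2)⌉₊ with hkdef
    have hk5 : 5 * A / A2 ≤ (k : ℝ) := hkdef ▸ Nat.le_ceil _
    have hceil0 : (k : ℝ) < 5 * A / A2 + 1 := hkdef ▸ Nat.ceil_lt_add_one (by positivity)
    clear_value k
    have hk2m : 2 * k ≤ m := by
      have hceil := hceil0
      have h10 : 10 * A / A2 = 2 * (5 * A / A2) := by ring
      have : (2 * k : ℝ) < (m : ℝ) := by push_cast; linarith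
      exact_mod_cast this.le
    have hkkR : ((k : ℝ)) ^ k ≤ L ^ 2 := by
      have hnatk : k ^ k ≤ (m + 1).factorial :=
        le_trans (pow_le_two_mul_factorial k) (Nat.factorial_le (by omega))
      calc ((k:ℝ)) ^ k = ((k ^ k : ℕ) : ℝ) := by push_cast; ring
        _ ≤ ((m + 1).factorial : ℝ) := by exact_mod_cast hnatk
        _ ≤ L ^ 2 := hfact
    -- k ≥ √A
    have hsA : (0:ℝ) < Real.sqrt A := Real.sqrt_pos.mpr hA0
    have hA2sqrt : A2 ≤ 2 * Real.sqrt A := by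
      have h := Real.log_le_sub_one_of_pos hsA
      rw [Real.log_sqrt hA0.le] at h
      rw [hA2def]
      linarith
    have hmm : Real.sqrt A * Real.sqrt A = A := Real.mul_self_sqrt hA0.le
    have hksqrt : Real.sqrt A ≤ (k : ℝ) := by
      have : Real.sqrt A * A2 ≤ 5 * A := by nlinarith
      have h5 : Real.sqrt A ≤ 5 * A / A2 := (le_div_iff₀ hA20).mpr this
      linarith
    have hk0 : (0:ℝ) < (k : ℝ) := lt_of_lt_of_le hsA hksqrt
    have hlogk : A2 / 2 ≤ Real.log (k : ℝ) := by
      have := Real.log_le_log hsA hksqrt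
      rw [Real.log_sqrt hA0.le] at this
      rw [hA2def]
      linarith
    have hklogk : (k : ℝ) * Real.log (k : ℝ) ≤ 2 * A := by
      have := Real.log_le_log (by positivity) hkkR
      rw [Real.log_pow, Real.log_pow] at this
      rw [hAdef]
      push_cast
      push_cast at this
      linarith
    have hmul : (5 * A / A2) * (A2 / 2) ≤ (k : ℝ) * Real.log (k : ℝ) := by
      apply mul_le_mul hk5 hlogk (by linarith) hk0.le
    have heq : (5 * A / A2) * (A2 / 2) = 5 * A / 2 := by field_simp
    linarith
  -- the product bound
  have hnthge : ∀ i ∈ Finset.Ico n m, (p : ℝ) ≤ (Nat.nth Nat.Prime i : ℝ) := by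
    intro i hi
    obtain ⟨hi1, _⟩ := Finset.mem_Ico.mp hi
    rw [hpdef]
    exact_mod_cast Nat.nth_monotone Nat.infinite_setOf_prime hi1
  set c : ℝ := 1 + 1 / ((p:ℝ) - 2) with hcdef
  clear_value c
  have hc1 : (1:ℝ) ≤ c := by
    rw [hcdef]
    have : (0:ℝ) ≤ 1 / ((p:ℝ) - 2) := by positivity
    linarith
  have hgle : ∀ i ∈ Finset.Ico n m, gg i ≤ c := by
    intro i hi
    have hge := hnthge i hi
    have hq2 : (0:ℝ) < (Nat.nth Nat.Prime i : ℝ) - 2 := by linarith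
    have : gg i = 1 + 1 / ((Nat.nth Nat.Prime i : ℝ) - 2) := by
      rw [gg]; field_simp; ring
    rw [this, hcdef]
    have : 1 / ((Nat.nth Nat.Prime i : ℝ) - 2) ≤ 1 / ((p:ℝ) - 2) :=
      one_div_le_one_div_of_le hp2pos (by linarith)
    linarith
  have hgpos : ∀ i, 1 ≤ i → 0 < gg i := by
    intro i hi
    have h3 : (3:ℝ) ≤ (Nat.nth Nat.Prime i : ℝ) := by exact_mod_cast three_le_nth hi
    rw [gg]
    apply div_pos <;> linarith
  set R := ∏ i ∈ Finset.Ico n m, gg i with hRdef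
  clear_value R
  -- R ≤ exp s with s = (m-n)/(p-2)
  set s : ℝ := ((m - n : ℕ) : ℝ) * (1 / ((p:ℝ) - 2)) with hsdef
  clear_value s
  have hs0 : 0 ≤ s := by rw [hsdef]; positivity
  have hRexp : R ≤ Real.exp s := by
    have h1 : R ≤ c ^ (m - n) := by
      rw [hRdef]
      have h := Finset.prod_le_prod (f := gg) (g := fun _ => c)
        (fun i hi => (hgpos i (le_trans hn1 (Finset.mem_Ico.mp hi).1)).le) hgle
      rwa [Finset.prod_const, Nat.card_Ico] at h

    have h2 : c ^ (m - n) ≤ (Real.exp (1 / ((p:ℝ) - 2))) ^ (m - n) := by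
      apply pow_le_pow_left₀ (by linarith) _
      rw [hcdef, add_comm]
      exact Real.add_one_le_exp _
    have h3 : (Real.exp (1 / ((p:ℝ) - 2))) ^ (m - n) = Real.exp s := by
      rw [← Real.exp_nat_mul, hsdef]
    linarith
  have hsle : s ≤ 96 / A2 := by
    have hmn' : ((m - n : ℕ) : ℝ) ≤ (m : ℝ) := by
      have : m - n ≤ m := Nat.sub_le m n
      exact_mod_cast this
    have hinv : 1 / ((p:ℝ) - 2) ≤ 8 / A := by
      rw [div_le_div_iff₀ hp2pos hA0]
      linarith
    have hstep : s ≤ (10 * A / A2 + 2) * (8 / A) := by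
      rw [hsdef]
      apply mul_le_mul (le_trans hmn' hmB) hinv (by positivity) (by positivity)
    have heq : (10 * A / A2 + 2) * (8 / A) = 80 / A2 + 16 / A := by
      field_simp; ring
    have hAA2 : A2 ≤ A := by
      rw [hA2def]
      linarith [Real.log_le_sub_one_of_pos hA0]
    have h16 : 16 / A ≤ 16 / A2 := by
      apply div_le_div_of_nonneg_left (by norm_num) hA20 hAA2
    have e1 : 80 / A2 + 16 / A2 = 96 / A2 := by ring
    linarith
  have hs12 : s ≤ 1/2 := by
    have : 96 / A2 ≤ 96 / 192 := div_le_div_of_nonneg_left (by norm_num) (by norm_num) hA2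
    linarith [this]
  have hexp : Real.exp s ≤ 1 + 2 * s := by
    have h := Real.add_one_le_exp (-s)
    rw [Real.exp_neg] at h
    have hEI : Real.exp s * (Real.exp s)⁻¹ = 1 := mul_inv_cancel₀ (Real.exp_pos s).ne'
    have hE0 : 0 < Real.exp s := Real.exp_pos s
    have h1s : (0:ℝ) < 1 - s := by linarith
    have key : Real.exp s * (1 - s) ≤ 1 := by
      calc Real.exp s * (1 - s) ≤ Real.exp s * (Real.exp s)⁻¹ :=
            mul_le_mul_of_nonneg_left (by linarith) hE0.le
        _ = 1 := hEI
    nlinarith [key, h1s, hs0, hs12, mul_nonneg hs0 (by linarith : (0:ℝ) ≤ 1 - 2*s)]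
  have hR : R ≤ 1 + 192 / A2 := by
    have h192 : 192 / A2 = 2 * (96 / A2) := by ring
    linarith
  -- now conclude
  by_cases hC2 : C2 = 0
  · rw [singularSeries_primorialN hm1, singularSeries_primorialN hn1, hC2]
    simp only [mul_zero, zero_mul, zero_div]
    have : (0:ℝ) ≤ 192 / A2 := by positivity
    linarith
  · rw [singularSeries_primorialN hm1, singularSeries_primorialN hn1]
    have hAn : (0:ℝ) < ∏ i ∈ Finset.Ico 1 n, gg i :=
      Finset.prod_pos fun i hi => hgpos i (Finset.mem_Ico.mp hi).1
    have hsplit : ∏ i ∈ Finset.Ico 1 m, gg i = (∏ i ∈ Finset.Ico 1 n, gg i) * R := by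
      rw [hRdef, Finset.prod_Ico_consecutive gg hn1 hnm]
    rw [hsplit, mul_div_mul_left _ _ (by simp [hC2] : (2:ℝ) * C2 ≠ 0)]
    rw [mul_comm, mul_div_assoc, div_self hAn.ne', mul_one]
    linarith
end
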